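/- There exist absolute constants C₁ > 0 and C₂ > 0 such that for every integer n ≥ 1 and every real β ≥ −1/2, (1/2)·(1 − C₁/(n+2β+3)) ≤ A_{n,β}/ω_n ≤ (1/2)·(1 + C₂·ln((n+1)(n+2β+2))/(n+2β+1)), where ω_n = n·vol_n(Bₙ). -/

import Mathlib

open MeasureTheory Metric

/-- The normalization constant `c_{m,β} = Γ(m/2+β+1)/(π^{m/2} Γ(β+1))` of the
beta distribution on the unit ball of `ℝ^m`. -/
noncomputable def betaConst (m : ℕ) (β : ℝ) : ℝ :=
  Real.Gamma ((m : ℝ) / 2 + β + 1) / (Real.pi ^ ((m : ℝ) / 2) * Real.Gamma (β + 1))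

/-- The constant `d_{n,β} = (n+2β+1)/c_{1,β+(n−1)/2}`. -/
noncomputable def dConst (n : ℕ) (β : ℝ) : ℝ :=
  ((n : ℝ) + 2 * β + 1) / betaConst 1 (β + ((n : ℝ) - 1) / 2)

/-- The surface area `ω_n = n·vol_n(Bₙ)` of the unit sphere `S^{n-1}`. -/
noncomputable def omegaN (n : ℕ) : ℝ :=
  (n : ℝ) * (volume (closedBall (0 : EuclideanSpace ℝ (Fin n)) 1)).toReal

/-- The constant `A_{n,β}` in Affentranger's asymptotic formula. -/
noncomputable def Aconst (n : ℕ) (β : ℝ) : ℝ :=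
  (omegaN n / 2) * (((n : ℝ) + 2 * β + 1) / ((n : ℝ) + 2 * β + 3)) *
    (Real.Gamma ((n : ℝ) + 1 + 2 / ((n : ℝ) + 2 * β + 1)) / Real.Gamma ((n : ℝ) + 1)) *
    dConst n β ^ ((2 : ℝ) / ((n : ℝ) + 2 * β + 1))

/-!
Write `t = n + 2β + 1`. Then `A_{n,β}/ω_n = (1/2) · t/(t+2) · Γ(n+1+2/t)/Γ(n+1) · d^{2/t}` with
`d = d_{n,β} = 2√π · Γ(t/2+1)/Γ(t/2+1/2)`. Log-convexity of `Γ` gives Gautschi's bounds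
`√(2πt) ≤ d ≤ √(2π(t+1))` and `Γ(x+2/t) ≤ Γ(x) (x(x+1))^{1/t}`, while `Γ` is increasing on `[2, ∞)`.
Hence the last two factors lie between `1` and `(2πx(x+1)(t+1))^{1/t} ≤ exp (4 log (x(t+1)) / t)`
for `x = n+1 ≤ t+1`; the exponent is at most `8`, so `exp v ≤ 1 + e⁸ v` finishes the upper bound,
and `t/(t+2) = 1 - 2/(t+2)` is the lower one.
-/

namespace Real

theorem Gamma_add_mul_le_mul_rpow {x h θ : ℝ} (hx : 0 < x) (hh : 0 ≤ h) (hθ₀ : 0 ≤ θ)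
    (hθ₁ : θ ≤ 1) : Gamma (x + θ * h) ≤ Gamma x * (Gamma (x + h) / Gamma x) ^ θ := by
  have hΓ : 0 < Gamma x := Gamma_pos_of_pos hx
  rcases hθ₀.eq_or_lt with rfl | hθ₀
  · simp
  rcases hθ₁.eq_or_lt with rfl | hθ₁
  · rw [one_mul, rpow_one, mul_div_cancel₀ _ hΓ.ne']
  calc Gamma (x + θ * h) = Gamma ((1 - θ) * x + θ * (x + h)) := by ring_nf
    _ ≤ Gamma x ^ (1 - θ) * Gamma (x + h) ^ θ :=
      Gamma_mul_add_mul_le_rpow_Gamma_mul_rpow_Gamma hx (by linarith) (by linarith) hθ₀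
        (by ring)
    _ = Gamma x * (Gamma (x + h) / Gamma x) ^ θ := by
      rw [rpow_sub hΓ, rpow_one, div_rpow (Gamma_pos_of_pos (by linarith)).le hΓ.le]
      field_simp

theorem Gamma_add_half_le_mul_sqrt {x : ℝ} (hx : 0 < x) :
    Gamma (x + 1 / 2) ≤ Gamma x * √x := by
  have := Gamma_add_mul_le_mul_rpow hx zero_le_one (θ := 1 / 2) (by norm_num) (by norm_num)
  rwa [mul_one, Gamma_add_one hx.ne', mul_div_cancel_right₀ _ (Gamma_pos_of_pos hx).ne',
    ← sqrt_eq_rpow] at this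

theorem Gamma_add_le_mul_rpow {x ε : ℝ} (hx : 0 < x) (hε₀ : 0 ≤ ε) (hε₂ : ε ≤ 2) :
    Gamma (x + ε) ≤ Gamma x * (x * (x + 1)) ^ (ε / 2) := by
  have := Gamma_add_mul_le_mul_rpow hx zero_le_two (θ := ε / 2) (by positivity) (by linarith)
  have hΓ₂ : Gamma (x + 2) = x * (x + 1) * Gamma x := by
    rw [show x + 2 = x + 1 + 1 by ring, Gamma_add_one (by positivity), Gamma_add_one hx.ne']
    ring
  rwa [div_mul_cancel₀ _ two_ne_zero, hΓ₂, mul_div_cancel_right₀ _ (Gamma_pos_of_pos hx).ne']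
    at this

theorem sqrt_mul_Gamma_add_half_le_Gamma_add_one {x : ℝ} (hx : 0 < x) :
    √x * Gamma (x + 1 / 2) ≤ Gamma (x + 1) := by
  calc √x * Gamma (x + 1 / 2) ≤ √x * (Gamma x * √x) :=
        mul_le_mul_of_nonneg_left (Gamma_add_half_le_mul_sqrt hx) (sqrt_nonneg x)
    _ = Gamma (x + 1) := by
      rw [Gamma_add_one hx.ne', mul_left_comm, mul_self_sqrt hx.le, mul_comm]

theorem exp_le_one_add_exp_mul {v V : ℝ} (hv : 0 ≤ v) (hvV : v ≤ V) :
    exp v ≤ 1 + exp V * v := by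
  have h : (1 - v) * exp v ≤ 1 := by
    simpa [← exp_add] using mul_le_mul_of_nonneg_right (one_sub_le_exp_neg v) (exp_pos v).le
  nlinarith [exp_le_exp.2 hvV]

theorem Gamma_div_mul_rpow_le {x t d : ℝ} (hx : 2 ≤ x) (hxt : x ≤ t + 1) (ht : 1 ≤ t)
    (hd₀ : 0 ≤ d) (hd : d ^ 2 ≤ 2 * π * (t + 1)) :
    Gamma (x + 2 / t) / Gamma x * d ^ (2 / t) ≤ 1 + 4 * exp 8 * log (x * (t + 1)) / t := by
  have ht₀ : 0 < t := by linarith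
  have hR : Gamma (x + 2 / t) / Gamma x ≤ (x * (x + 1)) ^ (1 / t) := by
    rw [div_le_iff₀ (Gamma_pos_of_pos (by linarith)), mul_comm]
    have := Gamma_add_le_mul_rpow (by linarith : 0 < x) (by positivity : 0 ≤ 2 / t)
      ((div_le_iff₀ ht₀).2 (by linarith))
    rwa [show 2 / t / 2 = 1 / t by ring] at this
  have hS : d ^ (2 / t) ≤ (2 * π * (t + 1)) ^ (1 / t) := by
    rw [div_eq_mul_one_div 2 t, rpow_mul hd₀, rpow_two]
    exact rpow_le_rpow (by positivity) hd (by positivity)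
  have hpoly : x * (x + 1) * (2 * π * (t + 1)) ≤ (x * (t + 1)) ^ 4 := by
    have hxx : x * (x + 1) ≤ x ^ 3 := by
      nlinarith [mul_nonneg (by linarith : 0 ≤ x) (mul_nonneg (by linarith : 0 ≤ x - 2)
        (by linarith : 0 ≤ x + 1))]
    have hπ : 2 * π * (t + 1) ≤ 8 * (t + 1) := by nlinarith [pi_le_four]
    calc x * (x + 1) * (2 * π * (t + 1)) ≤ x ^ 3 * (8 * (t + 1)) := by
          gcongr
      _ ≤ x ^ 3 * (t + 1) * (x * (t + 1) ^ 3) := by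
          have h₈ : 8 ≤ x * (t + 1) ^ 3 := by
            nlinarith [pow_le_pow_left₀ zero_le_two (by linarith : 2 ≤ t + 1) 3]
          have h₀ : 0 ≤ x ^ 3 * (t + 1) := by positivity
          nlinarith
      _ = (x * (t + 1)) ^ 4 := by ring
  have hlog₀ : 0 ≤ log (x * (t + 1)) := log_nonneg (by nlinarith)
  have hlog : 4 * log (x * (t + 1)) / t ≤ 8 := by
    have h₁ : log (x * (t + 1)) ≤ log ((t + 1) ^ 2) := log_le_log (by positivity) (by nlinarith)
    have h₂ : log (t + 1) ≤ t := by linarith [log_le_sub_one_of_pos (by linarith : 0 < t + 1)]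
    rw [log_pow] at h₁
    rw [div_le_iff₀ ht₀]
    push_cast at h₁
    linarith
  calc Gamma (x + 2 / t) / Gamma x * d ^ (2 / t)
        ≤ (x * (x + 1)) ^ (1 / t) * (2 * π * (t + 1)) ^ (1 / t) :=
        mul_le_mul hR hS (by positivity) (by positivity)
    _ = (x * (x + 1) * (2 * π * (t + 1))) ^ (1 / t) :=
      (mul_rpow (by positivity) (by positivity)).symm
    _ ≤ ((x * (t + 1)) ^ 4) ^ (1 / t) := rpow_le_rpow (by positivity) hpoly (by positivity)
    _ = exp (4 * log (x * (t + 1)) / t) := by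
      rw [rpow_def_of_pos (by positivity), log_pow]
      ring_nf
    _ ≤ 1 + exp 8 * (4 * log (x * (t + 1)) / t) :=
      exp_le_one_add_exp_mul (by positivity) hlog
    _ = 1 + 4 * exp 8 * log (x * (t + 1)) / t := by ring

end Real

open Real

section
variable {n : ℕ} {β : ℝ}

theorem dConst_eq (ht : 0 < (n : ℝ) + 2 * β + 1) :
    dConst n β = 2 * √π * (Gamma (((n : ℝ) + 2 * β + 1) / 2 + 1) /
      Gamma (((n : ℝ) + 2 * β + 1) / 2 + 1 / 2)) := by
  have h₁ : (1 : ℝ) / 2 + (β + ((n : ℝ) - 1) / 2) + 1 =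
      ((n : ℝ) + 2 * β + 1) / 2 + 1 / 2 := by ring
  have h₂ : β + ((n : ℝ) - 1) / 2 + 1 = ((n : ℝ) + 2 * β + 1) / 2 := by ring
  rw [dConst, betaConst, Nat.cast_one, ← sqrt_eq_rpow, h₁, h₂, Gamma_add_one (by positivity)]
  field_simp

theorem one_le_dConst (ht : 1 ≤ (n : ℝ) + 2 * β + 1) : 1 ≤ dConst n β := by
  set y := ((n : ℝ) + 2 * β + 1) / 2 with hy_def
  have hy : 1 / 2 ≤ y := by rw [hy_def]; linarith
  have hratio : √y ≤ Gamma (y + 1) / Gamma (y + 1 / 2) :=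
    (le_div_iff₀ (Gamma_pos_of_pos (by positivity))).2
      (sqrt_mul_Gamma_add_half_le_Gamma_add_one (by linarith))
  have hπ : 1 ≤ √π := one_le_sqrt.2 (by linarith [pi_gt_three])
  have hsqrt : 1 / 2 ≤ √y := le_sqrt_of_sq_le (by linarith)
  rw [dConst_eq (by linarith)]
  nlinarith

theorem dConst_sq_le (ht : 0 < (n : ℝ) + 2 * β + 1) :
    dConst n β ^ 2 ≤ 2 * π * ((n : ℝ) + 2 * β + 2) := by
  set y := ((n : ℝ) + 2 * β + 1) / 2
  have hy : 0 < y := by positivity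
  have hΓ : 0 < Gamma (y + 1 / 2) := Gamma_pos_of_pos (by positivity)
  have hratio : Gamma (y + 1) / Gamma (y + 1 / 2) ≤ √(y + 1 / 2) := by
    have := Gamma_add_half_le_mul_sqrt (by positivity : 0 < y + 1 / 2)
    rwa [add_assoc, add_halves, ← div_le_iff₀' hΓ] at this
  have hratio₀ : 0 ≤ Gamma (y + 1) / Gamma (y + 1 / 2) := by
    have := Gamma_pos_of_pos (by positivity : 0 < y + 1); positivity
  calc dConst n β ^ 2 = 4 * π * (Gamma (y + 1) / Gamma (y + 1 / 2)) ^ 2 := by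
        rw [dConst_eq ht, mul_pow, mul_pow, sq_sqrt pi_pos.le]; ring
    _ ≤ 4 * π * √(y + 1 / 2) ^ 2 := by gcongr
    _ = 2 * π * ((n : ℝ) + 2 * β + 2) := by rw [sq_sqrt (by positivity)]; ring

theorem omegaN_pos (hn : 0 < n) : 0 < omegaN n :=
  mul_pos (Nat.cast_pos.2 hn) <| ENNReal.toReal_pos (measure_closedBall_pos _ _ one_pos).ne'
    measure_closedBall_lt_top.ne

theorem Aconst_div_omegaN (hn : 0 < n) : Aconst n β / omegaN n =
    1 / 2 * (((n : ℝ) + 2 * β + 1) / ((n : ℝ) + 2 * β + 3)) *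
      (Gamma ((n : ℝ) + 1 + 2 / ((n : ℝ) + 2 * β + 1)) / Gamma ((n : ℝ) + 1) *
        dConst n β ^ ((2 : ℝ) / ((n : ℝ) + 2 * β + 1))) := by
  rw [Aconst, div_eq_iff (omegaN_pos hn).ne']
  ring

end

/-- There are absolute constants `C₁, C₂ > 0` such that for every `n ≥ 1`
and every `β ≥ −1/2`:
`(1/2)·(1 − C₁/(n+2β+3)) ≤ A_{n,β}/ω_n ≤ (1/2)·(1 + C₂·ln((n+1)(n+2β+2))/(n+2β+1))`. -/
theorem Aconst_div_omega_bounds :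
    ∃ C₁ : ℝ, 0 < C₁ ∧ ∃ C₂ : ℝ, 0 < C₂ ∧ ∀ n : ℕ, 1 ≤ n → ∀ β : ℝ, -1 / 2 ≤ β →
      (1 / 2) * (1 - C₁ / ((n : ℝ) + 2 * β + 3)) ≤ Aconst n β / omegaN n ∧
        Aconst n β / omegaN n ≤
          (1 / 2) * (1 + C₂ * Real.log (((n : ℝ) + 1) * ((n : ℝ) + 2 * β + 2)) /
            ((n : ℝ) + 2 * β + 1)) := by
  refine ⟨2, two_pos, 4 * exp 8, by positivity, fun n hn β hβ => ?_⟩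
  have hn' : (1 : ℝ) ≤ n := Nat.one_le_cast.2 hn
  have hd : dConst n β ^ 2 ≤ 2 * π * ((n + 2 * β + 1) + 1) := by
    linarith [dConst_sq_le (n := n) (β := β) (by linarith)]
  have hd₁ := one_le_dConst (n := n) (β := β) (by linarith)
  rw [Aconst_div_omegaN hn, show (n : ℝ) + 2 * β + 3 = (n + 2 * β + 1) + 2 by ring,
    show (n : ℝ) + 2 * β + 2 = (n + 2 * β + 1) + 1 by ring]
  set t := (n : ℝ) + 2 * β + 1 with ht_def
  have ht : 1 ≤ t := by linarith
  have hε : 0 ≤ 2 / t := div_nonneg zero_le_two (by linarith)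
  have hΓ : 1 ≤ Gamma (n + 1 + 2 / t) / Gamma (n + 1) :=
    (one_le_div (Gamma_pos_of_pos (by positivity))).2 <|
      Gamma_strictMonoOn_Ici.monotoneOn (Set.mem_Ici.2 (by linarith))
        (Set.mem_Ici.2 (by linarith)) (by linarith)
  have hlower := one_le_mul_of_one_le_of_one_le hΓ (one_le_rpow hd₁ hε)
  have hupper := Gamma_div_mul_rpow_le (x := n + 1) (by linarith) (by linarith) ht
    (by linarith) hd
  have hfrac₀ : 0 ≤ t / (t + 2) := div_nonneg (by linarith) (by linarith)
  have hfrac₁ : t / (t + 2) ≤ 1 := (div_le_one (by linarith)).2 (by linarith)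
  have hfrac : 1 - 2 / (t + 2) = t / (t + 2) := by field_simp; ring
  constructor
  · rw [hfrac]
    nlinarith
  · nlinarith
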